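/- Let E be a row-finite directed graph and t ≥ 0 an integer. For every function f : E^t → ℂ and every vertex v of E, Σ_{λ ∈ E^{t+1}, s(λ)=v} f(λ[t])/n_λ = Σ_{γ ∈ E^t, s(γ)=v} f(γ)/n_γ, where λ[t] denotes the truncation of λ to length t (equal to λ itself if λ has length < t). Equivalently, Φ^{t+1}(f ∘ τ_{t,t+1}) = Φ^t(f). -/

import Mathlib

/-- A directed graph with vertex set `V` and edge set `E`. -/
structure DirGraph (V E : Type) where
  src : E → V
  rng : E → V

namespace DirGraph

variable {V E : Type}

/-- A vertex is a sink if no edge emanates from it. -/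
def IsSink (G : DirGraph V E) (v : V) : Prop := ∀ e : E, G.src e ≠ v

/-- A graph is row-finite if every vertex emits only finitely many edges. -/
def RowFinite (G : DirGraph V E) : Prop := ∀ v : V, {e : E | G.src e = v}.Finite

/-- `G.ChainFrom v l` : the list of edges `l` forms a path starting at the vertex `v`. -/
def ChainFrom (G : DirGraph V E) : V → List E → Prop
  | _, [] => True
  | v, e :: es => G.src e = v ∧ G.ChainFrom (G.rng e) es

@[simp] theorem chainFrom_nil (G : DirGraph V E) (v : V) : G.ChainFrom v [] ↔ True := Iff.rfl

@[simp] theorem chainFrom_cons (G : DirGraph V E) (v : V) (e : E) (es : List E) :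
    G.ChainFrom v (e :: es) ↔ G.src e = v ∧ G.ChainFrom (G.rng e) es := Iff.rfl

/-- A finite path in `G`: a starting vertex together with a compatible list of edges.
(Paths of length `0` are identified with their starting vertex.) -/
structure GPath (G : DirGraph V E) where
  start : V
  edges : List E
  ok : G.ChainFrom start edges

namespace GPath

variable {G : DirGraph V E}

/-- The range (terminal vertex) of a path. -/
def range (p : GPath G) : V := (p.edges.getLast?.map G.rng).getD p.start

/-- `n_λ = ∏_{i=1}^{|λ|} |s⁻¹(s(e_i))|` for a path `λ = e₁⋯e_k`; equals `1` for paths of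
length zero. -/
noncomputable def nval (p : GPath G) : ℕ :=
  (p.edges.map (fun e => {f : E | G.src f = G.src e}.ncard)).prod

end GPath

/-- Membership in `E^t`: paths of length exactly `t`, together with the paths of length
`< t` whose range is a sink. -/
def MemE (G : DirGraph V E) (t : ℕ) (p : GPath G) : Prop :=
  p.edges.length = t ∨ (p.edges.length < t ∧ G.IsSink p.range)

/-- The set `E^t` of paths of length `t` together with shorter paths ending in a sink. -/
def EtP (G : DirGraph V E) (t : ℕ) : Type _ := {p : GPath G // G.MemE t p}


theorem chainFrom_take {G : DirGraph V E} {v : V} {l : List E} (h : G.ChainFrom v l) (r : ℕ) :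
    G.ChainFrom v (l.take r) := by
  induction l generalizing v r with
  | nil => simp
  | cons e es ih =>
    cases r with
    | zero => simp
    | succ r => exact ⟨h.1, ih h.2 r⟩

/-- The initial segment of length `r` of a path (the whole path if its length is `≤ r`). -/
def GPath.take {G : DirGraph V E} (p : GPath G) (r : ℕ) : GPath G :=
  ⟨p.start, p.edges.take r, chainFrom_take p.ok r⟩

theorem range_take_of_le {G : DirGraph V E} {p : GPath G} {r : ℕ} (h : p.edges.length ≤ r) :
    (p.take r).range = p.range := by
  simp [GPath.take, GPath.range, List.take_of_length_le h]

theorem memE_take {G : DirGraph V E} {s : ℕ} {p : GPath G} (hp : G.MemE s p) {r : ℕ}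
    (hrs : r ≤ s) : G.MemE r (p.take r) := by
  rcases le_or_gt r p.edges.length with h | h
  · left
    simp only [GPath.take, List.length_take]
    omega
  · right
    refine ⟨?_, ?_⟩
    · simp only [GPath.take, List.length_take]
      omega
    · rw [range_take_of_le h.le]
      rcases hp with h1 | ⟨_, h2⟩
      · omega
      · exact h2

theorem memE_take_sink {G : DirGraph V E} {p : GPath G} (hp : G.IsSink p.range) (r : ℕ) :
    G.MemE r (p.take r) := by
  rcases le_or_gt r p.edges.length with h | h
  · left
    simp only [GPath.take, List.length_take]
    omega
  · right
    refine ⟨?_, ?_⟩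
    · simp only [GPath.take, List.length_take]
      omega
    · rw [range_take_of_le h.le]
      exact hp

/-- The truncation map `τ_{r,s} : E^s → E^r` (for `r ≤ s`), sending a path to its initial
segment of length `r` if its length is `≥ r`, and to itself otherwise. -/
def trunc (G : DirGraph V E) {r s : ℕ} (hrs : r ≤ s) (p : G.EtP s) : G.EtP r :=
  ⟨p.1.take r, memE_take p.2 hrs⟩


/-- The conditional expectation `Φ^t : C₀(E^t) → C₀(E⁰)`,
`(Φ^t f)(v) = Σ_{λ ∈ E^t, s(λ)=v} f(λ)/n_λ`. -/
noncomputable def Phi (G : DirGraph V E) (t : ℕ) (f : G.EtP t → ℂ) (v : V) : ℂ :=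
  ∑ᶠ p ∈ {q : G.EtP t | q.1.start = v}, f p / ((p : G.EtP t).1.nval : ℂ)

end DirGraph

open DirGraph

/-!
The fibre of `τ_{t,t+1}` over `γ ∈ E^t` is `{γ}` when `γ` ends at a sink, and otherwise
consists of the `k = |s⁻¹(r(γ))|` extensions `γe` of `γ` by one edge, each with `n_{γe} = k n_γ`
(row-finiteness makes `k` finite, hence nonzero). Either way the weights `1/n_λ` over the fibre
add up to `1/n_γ`, so the sum defining `Φ^{t+1}(f ∘ τ_{t,t+1})` regroups fibrewise into `Φ^t f`.
-/

namespace DirGraph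

variable {V E : Type} {G : DirGraph V E}

theorem GPath.ext {p q : GPath G} (hs : p.start = q.start) (he : p.edges = q.edges) : p = q := by
  cases p; cases q; cases hs; cases he; rfl

theorem chainFrom_append {v : V} {l l' : List E} :
    G.ChainFrom v (l ++ l') ↔
      G.ChainFrom v l ∧ G.ChainFrom ((l.getLast?.map G.rng).getD v) l' := by
  induction l generalizing v with
  | nil => simp
  | cons e es ih =>
    rw [List.cons_append, chainFrom_cons, chainFrom_cons, ih, and_assoc, List.getLast?_cons]
    cases es.getLast? <;> rfl

theorem finite_setOf_chainFrom_length_le (hG : G.RowFinite) (t : ℕ) (v : V) :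
    {l : List E | G.ChainFrom v l ∧ l.length ≤ t}.Finite := by
  induction t generalizing v with
  | zero =>
    refine (Set.finite_singleton []).subset ?_
    rintro l ⟨-, hl⟩
    exact List.length_eq_zero_iff.mp (Nat.le_zero.mp hl)
  | succ t ih =>
    refine (((hG v).biUnion fun e _ => (ih (G.rng e)).image (e :: ·)).insert []).subset ?_
    rintro (_ | ⟨e, es⟩) ⟨hc, hl⟩
    · exact Set.mem_insert _ _
    · exact Set.mem_insert_of_mem _
        (Set.mem_biUnion hc.1 ⟨es, ⟨hc.2, Nat.le_of_succ_le_succ hl⟩, rfl⟩)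

theorem length_le_of_memE {t : ℕ} {p : GPath G} (hp : G.MemE t p) : p.edges.length ≤ t := by
  rcases hp with h | ⟨h, -⟩ <;> omega

theorem finite_setOf_start_eq (hG : G.RowFinite) (t : ℕ) (v : V) :
    {q : G.EtP t | q.1.start = v}.Finite := by
  refine Set.Finite.of_finite_image (f := fun q => q.1.edges)
    ((finite_setOf_chainFrom_length_le hG t v).subset ?_) ?_
  · rintro _ ⟨q, rfl, rfl⟩
    exact ⟨q.1.ok, length_le_of_memE q.2⟩
  · intro q hq q' hq' h
    exact Subtype.ext (GPath.ext (hq.trans hq'.symm) h)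

namespace GPath

theorem take_of_length_le {p : GPath G} {r : ℕ} (h : p.edges.length ≤ r) : p.take r = p :=
  GPath.ext rfl (List.take_of_length_le h)

theorem src_getElem_eq_range_take (p : GPath G) {r : ℕ} (h : r < p.edges.length) :
    G.src p.edges[r] = (p.take r).range := by
  have hok : G.ChainFrom p.start (p.edges.take r ++ p.edges.drop r) := by
    rw [List.take_append_drop]
    exact p.ok
  have hdrop := (chainFrom_append.1 hok).2
  rw [List.drop_eq_getElem_cons h] at hdrop
  exact hdrop.1

theorem eq_of_take_eq_of_isSink {p q : GPath G} {r : ℕ} (hq : q.take r = p)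
    (hp : G.IsSink p.range) : q = p := by
  by_cases h : q.edges.length ≤ r
  · rwa [take_of_length_le h] at hq
  · exact absurd (hq ▸ q.src_getElem_eq_range_take (not_le.mp h)) (hp _)

def concat (p : GPath G) (e : E) (he : G.src e = p.range) : GPath G :=
  ⟨p.start, p.edges ++ [e], chainFrom_append.2 ⟨p.ok, he, trivial⟩⟩

theorem take_concat (p : GPath G) (e : E) (he : G.src e = p.range) :
    (p.concat e he).take p.edges.length = p :=
  GPath.ext rfl (List.take_left' rfl)

theorem nval_concat (p : GPath G) (e : E) (he : G.src e = p.range) :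
    (p.concat e he).nval = p.nval * {f : E | G.src f = p.range}.ncard := by
  simp [concat, nval, he]

theorem concat_injective {p : GPath G} {e e' : E} {he : G.src e = p.range}
    {he' : G.src e' = p.range} (h : p.concat e he = p.concat e' he') : e = e' := by
  simpa [concat] using congrArg GPath.edges h

theorem exists_eq_concat_of_take_eq {p q : GPath G} {r : ℕ} (hq : q.take r = p)
    (h : q.edges.length = r + 1) : ∃ e he, q = p.concat e he := by
  subst hq
  refine ⟨q.edges[r], q.src_getElem_eq_range_take (by omega), GPath.ext rfl ?_⟩
  conv_lhs =>
    rw [← List.take_of_length_le h.le, List.take_add_one, List.getElem?_eq_getElem (by omega)]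
  rfl

end GPath

theorem trunc_eq_iff {t : ℕ} {p : G.EtP (t + 1)} {γ : G.EtP t} :
    G.trunc (Nat.le_succ t) p = γ ↔ p.1.take t = γ.1 :=
  Subtype.ext_iff

theorem sum_inv_nval_fiber_of_isSink {t : ℕ} (γ : G.EtP t) (hγ : G.IsSink γ.1.range)
    (F : Finset (G.EtP (t + 1))) (hF : ∀ p, p ∈ F ↔ G.trunc (Nat.le_succ t) p = γ) :
    ∑ p ∈ F, (p.1.nval : ℂ)⁻¹ = (γ.1.nval : ℂ)⁻¹ := by
  have hlen := length_le_of_memE γ.2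
  let γ' : G.EtP (t + 1) := ⟨γ.1, Or.inr ⟨Nat.lt_succ_of_le hlen, hγ⟩⟩
  have hF' : F = {γ'} := by
    refine Finset.eq_singleton_iff_unique_mem.2 ⟨(hF γ').2 ?_, fun p hp => ?_⟩
    · exact trunc_eq_iff.2 (GPath.take_of_length_le hlen)
    · exact Subtype.ext (GPath.eq_of_take_eq_of_isSink (trunc_eq_iff.1 ((hF p).1 hp)) hγ)
  rw [hF', Finset.sum_singleton]

theorem sum_inv_nval_fiber_of_not_isSink (hG : G.RowFinite) {t : ℕ} (γ : G.EtP t)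
    (hγ : ¬G.IsSink γ.1.range) (F : Finset (G.EtP (t + 1)))
    (hF : ∀ p, p ∈ F ↔ G.trunc (Nat.le_succ t) p = γ) :
    ∑ p ∈ F, (p.1.nval : ℂ)⁻¹ = (γ.1.nval : ℂ)⁻¹ := by
  have hlen : γ.1.edges.length = t := γ.2.resolve_right fun h => hγ h.2
  set S := {e : E | G.src e = γ.1.range}
  have hS : S.ncard ≠ 0 := by
    obtain ⟨e, he⟩ : ∃ e, G.src e = γ.1.range := by simpa [IsSink] using hγ
    exact ((Set.ncard_pos (hG _)).2 ⟨e, he⟩).ne'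
  have hext : ∀ p ∈ F, ∃ e he, p.1 = γ.1.concat e he := by
    intro p hp
    have hp' := trunc_eq_iff.1 ((hF p).1 hp)
    have hplen : p.1.edges.length = t + 1 := by
      refine p.2.resolve_right fun h => hγ ?_
      rw [← hp', GPath.take_of_length_le (by omega)]
      exact h.2
    exact GPath.exists_eq_concat_of_take_eq hp' hplen
  have hcard : S.ncard = F.card := by
    rw [← Set.ncard_coe_finset]
    refine Set.ncard_congr
      (fun e he => ⟨γ.1.concat e he, Or.inl (by simp [GPath.concat, hlen])⟩)
      (fun e he => (hF _).2 (trunc_eq_iff.2 (hlen ▸ γ.1.take_concat e he)))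
      (fun e e' he he' h =>
        GPath.concat_injective (he := he) (he' := he') (congrArg Subtype.val h)) ?_
    intro p hp
    obtain ⟨e, he, hpe⟩ := hext p hp
    exact ⟨e, he, Subtype.ext hpe.symm⟩
  calc ∑ p ∈ F, (p.1.nval : ℂ)⁻¹
      = ∑ _p ∈ F, ((γ.1.nval : ℂ) * S.ncard)⁻¹ := by
        refine Finset.sum_congr rfl fun p hp => ?_
        obtain ⟨e, he, hpe⟩ := hext p hp
        rw [hpe, GPath.nval_concat, Nat.cast_mul]
    _ = (γ.1.nval : ℂ)⁻¹ := by
        rw [Finset.sum_const, ← hcard, nsmul_eq_mul, mul_inv, mul_left_comm,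
          mul_inv_cancel₀ (Nat.cast_ne_zero.2 hS), mul_one]

theorem sum_inv_nval_fiber (hG : G.RowFinite) {t : ℕ} (γ : G.EtP t)
    (F : Finset (G.EtP (t + 1))) (hF : ∀ p, p ∈ F ↔ G.trunc (Nat.le_succ t) p = γ) :
    ∑ p ∈ F, (p.1.nval : ℂ)⁻¹ = (γ.1.nval : ℂ)⁻¹ := by
  by_cases hγ : G.IsSink γ.1.range
  · exact sum_inv_nval_fiber_of_isSink γ hγ F hF
  · exact sum_inv_nval_fiber_of_not_isSink hG γ hγ F hF

end DirGraph

/-- For a row-finite graph `E`, `t ≥ 0`, `f : E^t → ℂ` and a vertex `v`: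
`Σ_{λ ∈ E^{t+1}, s(λ)=v} f(λ[t])/n_λ = Σ_{γ ∈ E^t, s(γ)=v} f(γ)/n_γ`, i.e.
`Φ^{t+1}(f ∘ τ_{t,t+1}) = Φ^t(f)`. -/
theorem Phi_succ_comp_trunc {V E : Type} (G : DirGraph V E) (hG : G.RowFinite)
    (t : ℕ) (f : G.EtP t → ℂ) (v : V) :
    G.Phi (t + 1) (fun p => f (G.trunc (Nat.le_succ t) p)) v = G.Phi t f v := by
  classical
  have hS := finite_setOf_start_eq hG (t + 1) v
  have hT := finite_setOf_start_eq hG t v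
  have hmaps : ∀ p ∈ hS.toFinset, G.trunc (Nat.le_succ t) p ∈ hT.toFinset := by
    intro p hp
    simp only [Set.Finite.mem_toFinset] at hp ⊢
    exact hp
  rw [Phi, Phi, finsum_mem_eq_finite_toFinset_sum _ hS, finsum_mem_eq_finite_toFinset_sum _ hT,
    ← Finset.sum_fiberwise_of_maps_to hmaps]
  refine Finset.sum_congr rfl fun γ hγ => ?_
  have hfiber : ∀ p, p ∈ hS.toFinset.filter (G.trunc (Nat.le_succ t) · = γ) ↔
      G.trunc (Nat.le_succ t) p = γ := by
    intro p
    simp only [Finset.mem_filter, Set.Finite.mem_toFinset] at hγ ⊢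
    exact ⟨And.right, fun h => ⟨(h ▸ hγ : (G.trunc (Nat.le_succ t) p).1.start = v), h⟩⟩
  calc _ = f γ * ∑ p ∈ hS.toFinset.filter (G.trunc (Nat.le_succ t) · = γ), (p.1.nval : ℂ)⁻¹ := by
        rw [Finset.mul_sum]
        exact Finset.sum_congr rfl fun p hp => by rw [(hfiber p).1 hp, div_eq_mul_inv]
    _ = f γ / γ.1.nval := by rw [sum_inv_nval_fiber hG γ _ hfiber, div_eq_mul_inv]
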